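/- arXiv:0911.4860 — 5 statements merged into one kernel-verified Lean document; each statement's English description precedes it below -/
import Mathlib

section
/- Let X be a Banach space with a Schauder basis (e_n) with coordinate functionals (f_n), and let R_n denote the tail projections R_n x = x - Σ_{k≤n} f_k(x) e_k. Assume ‖R_n‖ = 1 for every n. If (α_n) ⊆ [0,1] is a non-decreasing sequence, then for every x ∈ X the series Σ α_n f_n(x) e_n converges and ‖Σ_{n=1}^∞ α_n f_n(x) e_n‖ ≤ ‖x‖. -/
open Filter Finset Topology

/-- The tail projection `R_n = I - P_n` associated to a Schauder basis system,
where `P_n x = ∑_{k<n} f_k(x) e_k`. -/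
noncomputable def tailProj {X : Type*} [NormedAddCommGroup X] [NormedSpace ℝ X]
    (f : ℕ → X →L[ℝ] ℝ) (e : ℕ → X) (n : ℕ) : X →L[ℝ] X :=
  ContinuousLinearMap.id ℝ X - ∑ k ∈ Finset.range n, (f k).smulRight (e k)

/-!
Writing `f_k(x) e_k = R_k x - R_{k+1} x`, Abel summation turns the partial sums of
`∑ α_k f_k(x) e_k` into `α_0 x + ∑_{k<n} (α_{k+1} - α_k) R_{k+1} x - α_n R_{n+1} x`.
The last term tends to `0` because `R_n x → 0`, and the middle series has nonnegative
coefficients adding up to at most `1 - α_0` against vectors of norm at most `‖x‖`, so it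
converges absolutely and the limit has norm at most `α_0 ‖x‖ + (1 - α_0) ‖x‖ = ‖x‖`.
-/

theorem sum_range_succ_smul_sub_succ {R M : Type*} [CommRing R] [AddCommGroup M] [Module R M]
    (a : ℕ → R) (r : ℕ → M) (n : ℕ) :
    ∑ k ∈ range (n + 1), a k • (r k - r (k + 1)) =
      a 0 • r 0 + ∑ k ∈ range n, (a (k + 1) - a k) • r (k + 1) - a n • r (n + 1) := by
  induction n with
  | zero => simp [smul_sub]
  | succ n ih =>
    rw [sum_range_succ, ih, sum_range_succ]
    module

section MonotonePerturbation

variable {X : Type*} [NormedAddCommGroup X] [NormedSpace ℝ X]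

theorem exists_hasSum_sub_succ_smul_norm_le [CompleteSpace X] {a : ℕ → ℝ} (hmono : Monotone a)
    (ha₁ : ∀ n, a n ≤ 1) {r : ℕ → X} {M : ℝ} (hr : ∀ n, ‖r n‖ ≤ M) :
    ∃ S, HasSum (fun k => (a (k + 1) - a k) • r (k + 1)) S ∧ ‖S‖ ≤ (1 - a 0) * M := by
  have hd : ∀ k, 0 ≤ a (k + 1) - a k := fun k => sub_nonneg.2 (hmono k.le_succ)
  have hpartial : ∀ n, ∑ k ∈ range n, (a (k + 1) - a k) ≤ 1 - a 0 := fun n => by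
    rw [sum_range_sub]
    linarith [ha₁ n]
  have hD := (summable_of_sum_range_le hd hpartial).hasSum.mul_right M
  have hs : ∀ k, ‖(a (k + 1) - a k) • r (k + 1)‖ ≤ (a (k + 1) - a k) * M := fun k => by
    rw [norm_smul, Real.norm_of_nonneg (hd k)]
    exact mul_le_mul_of_nonneg_left (hr _) (hd k)
  have hS := (hD.summable.of_norm_bounded hs).hasSum
  refine ⟨_, hS, (hS.norm_le_of_bounded hD hs).trans ?_⟩
  exact mul_le_mul_of_nonneg_right (Real.tsum_le_of_sum_range_le hd hpartial)
    ((norm_nonneg _).trans (hr 0))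

theorem exists_tendsto_sum_smul_sub_succ_norm_le [CompleteSpace X] {a : ℕ → ℝ}
    (hmono : Monotone a) (ha₀ : 0 ≤ a 0) (ha₁ : ∀ n, a n ≤ 1) {r : ℕ → X}
    (hr₀ : Tendsto r atTop (𝓝 0)) {M : ℝ} (hr : ∀ n, ‖r n‖ ≤ M) :
    ∃ L, Tendsto (fun n => ∑ k ∈ range n, a k • (r k - r (k + 1))) atTop (𝓝 L) ∧ ‖L‖ ≤ M := by
  obtain ⟨S, hS, hSle⟩ := exists_hasSum_sub_succ_smul_norm_le hmono ha₁ hr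
  have htail : Tendsto (fun n => a n • r (n + 1)) atTop (𝓝 0) := by
    refine squeeze_zero_norm (fun n => ?_)
      (tendsto_zero_iff_norm_tendsto_zero.1 (hr₀.comp (tendsto_add_atTop_nat 1)))
    rw [norm_smul, Real.norm_of_nonneg (ha₀.trans (hmono n.zero_le))]
    exact mul_le_of_le_one_left (norm_nonneg _) (ha₁ n)
  refine ⟨a 0 • r 0 + S, ?_, ?_⟩
  · rw [← tendsto_add_atTop_iff_nat 1]
    simp_rw [sum_range_succ_smul_sub_succ]
    simpa using (tendsto_const_nhds.add hS.tendsto_sum_nat).sub htail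
  · calc ‖a 0 • r 0 + S‖ ≤ a 0 * M + (1 - a 0) * M := by
          refine norm_add_le_of_le ?_ hSle
          rw [norm_smul, Real.norm_of_nonneg ha₀]
          exact mul_le_mul_of_nonneg_left (hr 0) ha₀
      _ = M := by ring

end MonotonePerturbation

section TailProj

variable {X : Type*} [NormedAddCommGroup X] [NormedSpace ℝ X] (f : ℕ → X →L[ℝ] ℝ) (e : ℕ → X)

theorem tailProj_apply (n : ℕ) (x : X) :
    tailProj f e n x = x - ∑ k ∈ range n, f k x • e k := by
  simp [tailProj]

theorem tailProj_sub_tailProj_succ_apply (n : ℕ) (x : X) :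
    tailProj f e n x - tailProj f e (n + 1) x = f n x • e n := by
  simp only [tailProj_apply, sum_range_succ]
  abel

theorem tendsto_tailProj_apply {x : X}
    (hx : Tendsto (fun n => ∑ k ∈ range n, f k x • e k) atTop (𝓝 x)) :
    Tendsto (fun n => tailProj f e n x) atTop (𝓝 0) := by
  simpa [tailProj_apply] using hx.const_sub x

theorem norm_tailProj_apply_le (hR : ∀ n, 1 ≤ n → ‖tailProj f e n‖ = 1) (n : ℕ) (x : X) :
    ‖tailProj f e n x‖ ≤ ‖x‖ := by
  rcases n.eq_zero_or_pos with rfl | hn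
  · simp [tailProj_apply]
  · simpa [hR n hn] using (tailProj f e n).le_opNorm x

end TailProj

theorem monotone_perturbation_nondecreasing_general
    {X : Type*} [NormedAddCommGroup X] [NormedSpace ℝ X] [CompleteSpace X]
    (e : ℕ → X) (f : ℕ → X →L[ℝ] ℝ)
    (hexp : ∀ x : X, Tendsto (fun n => ∑ k ∈ Finset.range n, f k x • e k) atTop (𝓝 x))
    (hR : ∀ n, 1 ≤ n → ‖tailProj f e n‖ = 1)
    (α : ℕ → ℝ) (hα : ∀ n, α n ∈ Set.Icc (0 : ℝ) 1) (hmono : Monotone α) (x : X) :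
    ∃ L : X,
      Tendsto (fun n => ∑ k ∈ Finset.range n, α k • (f k x • e k)) atTop (𝓝 L) ∧
      ‖L‖ ≤ ‖x‖ := by
  simp_rw [← tailProj_sub_tailProj_succ_apply f e _ x]
  exact exists_tendsto_sum_smul_sub_succ_norm_le hmono (hα 0).1 (fun n => (hα n).2)
    (tendsto_tailProj_apply f e (hexp x)) (norm_tailProj_apply_le f e hR · x)

theorem monotone_perturbation_nondecreasing
    {X : Type*} [NormedAddCommGroup X] [NormedSpace ℝ X] [CompleteSpace X]
    (e : ℕ → X) (f : ℕ → X →L[ℝ] ℝ)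
    (hexp : ∀ x : X, Tendsto (fun n => ∑ k ∈ Finset.range n, f k x • e k) atTop (𝓝 x))
    (hbi : ∀ k j, f k (e j) = if k = j then (1 : ℝ) else 0)
    (hR : ∀ n, 1 ≤ n → ‖tailProj f e n‖ = 1)
    (α : ℕ → ℝ) (hα : ∀ n, α n ∈ Set.Icc (0 : ℝ) 1) (hmono : Monotone α) (x : X) :
    ∃ L : X,
      Tendsto (fun n => ∑ k ∈ Finset.range n, α k • (f k x • e k)) atTop (𝓝 L) ∧
      ‖L‖ ≤ ‖x‖ :=
  monotone_perturbation_nondecreasing_general e f hexp hR α hα hmono x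
end

section
/- Let X be a Banach space and Y a proper complemented subspace of X via a bounded linear projection P with range Y. Suppose there exists a continuous map g : ℝ × Y → Y such that the equation y' = g(t, y) has no solution on any open interval. Then there exists a continuous map f : X → X such that the autonomous equation x' = f(x) has no solution on any open interval. -/
/-!
Pick `e ∈ ker P` and a functional `φ` with `φ e = 1` vanishing on `Y = range P`, and set
`f x = e + g (φ x, P x)`. Along a solution of `x' = f x` we get `(φ ∘ x)' = 1`, so `φ (x t)` is
`t` up to a constant shift, and then `P ∘ x`, shifted in time, solves `y' = g (t, y)`.
-/

open Set

theorem exists_eq_add_const_of_hasDerivAt_one {u : ℝ → ℝ} {a b : ℝ}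
    (hu : ∀ t ∈ Ioo a b, HasDerivAt u 1 t) : ∃ c, ∀ t ∈ Ioo a b, u t = t + c :=
  isOpen_Ioo.exists_eq_add_of_deriv_eq isPreconnected_Ioo
    (fun t ht ↦ (hu t ht).differentiableAt.differentiableWithinAt) differentiableOn_id
    (fun t ht ↦ by simp [(hu t ht).deriv])

theorem exists_time_shift_hasDerivAt_of_clock_component
    {X Y : Type*} [NormedAddCommGroup X] [NormedSpace ℝ X] [NormedAddCommGroup Y]
    [NormedSpace ℝ Y] {f : X → X} {g : ℝ × Y → Y} {φ : X →L[ℝ] ℝ} {L : X →L[ℝ] Y}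
    (hφf : ∀ x, φ (f x) = 1) (hLf : ∀ x, L (f x) = g (φ x, L x)) {a b : ℝ} {x : ℝ → X}
    (hx : ∀ t ∈ Ioo a b, HasDerivAt x (f (x t)) t) :
    ∃ c, ∀ s ∈ Ioo (a + c) (b + c),
      HasDerivAt (fun s ↦ L (x (s - c))) (g (s, L (x (s - c)))) s := by
  obtain ⟨c, hc⟩ : ∃ c, ∀ t ∈ Ioo a b, φ (x t) = t + c :=
    exists_eq_add_const_of_hasDerivAt_one fun t ht ↦ by
      have hφx : HasDerivAt (fun t ↦ φ (x t)) (φ (f (x t))) t :=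
        φ.hasFDerivAt.comp_hasDerivAt t (hx t ht)
      rwa [hφf] at hφx
  refine ⟨c, fun s hs ↦ ?_⟩
  have hsc : s - c ∈ Ioo a b := ⟨by linarith [hs.1], by linarith [hs.2]⟩
  have hLx : HasDerivAt (fun s ↦ L (x (s - c))) (L (f (x (s - c)))) s :=
    L.hasFDerivAt.comp_hasDerivAt s ((hx (s - c) hsc).comp_sub_const s c)
  rwa [hLf, hc _ hsc, sub_add_cancel] at hLx

theorem ContinuousLinearMap.exists_mem_ker_dual_eq_one_of_range_ne_top
    {𝕜 X : Type*} [RCLike 𝕜] [NormedAddCommGroup X] [NormedSpace 𝕜 X]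
    (P : X →L[𝕜] X) (hproj : ∀ x, P (P x) = P x)
    (hproper : LinearMap.range (P : X →ₗ[𝕜] X) ≠ ⊤) :
    ∃ (e : X) (φ : X →L[𝕜] 𝕜), P e = 0 ∧ φ e = 1 ∧ ∀ x, φ (P x) = 0 := by
  obtain ⟨e₀, he₀⟩ : ∃ e₀, e₀ ∉ LinearMap.range (P : X →ₗ[𝕜] X) := by
    by_contra! h
    exact hproper (Submodule.eq_top_iff'.mpr h)
  set e := e₀ - P e₀
  have hPe : P e = 0 := by simp [e, hproj]
  have he : ‖e‖ ≠ 0 := by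
    exact norm_ne_zero_iff.mpr fun h ↦ he₀ ⟨e₀, (sub_eq_zero.mp h).symm⟩
  obtain ⟨ψ, -, hψ⟩ := exists_dual_vector 𝕜 e he
  refine ⟨e, (‖e‖⁻¹ : 𝕜) • ψ.comp (ContinuousLinearMap.id 𝕜 X - P), hPe, ?_, fun x ↦ ?_⟩
  · simp [hPe, hψ, he]
  · simp [hproj]

theorem autonomous_from_complemented_subspace_general
    {X : Type*} [NormedAddCommGroup X] [NormedSpace ℝ X]
    (P : X →L[ℝ] X) (hproj : ∀ x, P (P x) = P x)
    (hproper : LinearMap.range (P : X →ₗ[ℝ] X) ≠ (⊤ : Submodule ℝ X))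
    (g : ℝ × (LinearMap.range (P : X →ₗ[ℝ] X)) → (LinearMap.range (P : X →ₗ[ℝ] X))) (hg : Continuous g)
    (hnosol : ¬ ∃ (a b : ℝ) (y : ℝ → LinearMap.range (P : X →ₗ[ℝ] X)), a < b ∧
        ∀ t ∈ Set.Ioo a b, HasDerivAt y (g (t, y t)) t) :
    ∃ f : X → X, Continuous f ∧ ¬ ∃ (a b : ℝ) (x : ℝ → X), a < b ∧
        ∀ t ∈ Set.Ioo a b, HasDerivAt x (f (x t)) t := by
  obtain ⟨e, φ, hPe, hφe, hφP⟩ := P.exists_mem_ker_dual_eq_one_of_range_ne_top hproj hproper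
  let Y := LinearMap.range (P : X →ₗ[ℝ] X)
  let L : X →L[ℝ] Y := P.codRestrict Y (LinearMap.mem_range_self _)
  have hLY : ∀ y : Y, L y = y := by
    rintro ⟨_, u, rfl⟩
    exact Subtype.ext (hproj u)
  have hφY : ∀ y : Y, φ y = 0 := by
    rintro ⟨_, u, rfl⟩
    exact hφP u
  let f : X → X := fun x ↦ e + g (φ x, L x)
  have hφf : ∀ x, φ (f x) = 1 := fun x ↦ by simp [f, hφe, hφY]
  have hLf : ∀ x, L (f x) = g (φ x, L x) := fun x ↦ by ext; simp [f, L, hPe, hLY]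
  refine ⟨f, by fun_prop, ?_⟩
  rintro ⟨a, b, x, hab, hx⟩
  obtain ⟨c, hc⟩ := exists_time_shift_hasDerivAt_of_clock_component hφf hLf hx
  exact hnosol ⟨a + c, b + c, _, by linarith, hc⟩

theorem autonomous_from_complemented_subspace
    {X : Type*} [NormedAddCommGroup X] [NormedSpace ℝ X] [CompleteSpace X]
    (P : X →L[ℝ] X) (hproj : ∀ x, P (P x) = P x)
    (hproper : LinearMap.range (P : X →ₗ[ℝ] X) ≠ (⊤ : Submodule ℝ X))
    (g : ℝ × (LinearMap.range (P : X →ₗ[ℝ] X)) → (LinearMap.range (P : X →ₗ[ℝ] X))) (hg : Continuous g)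
    (hnosol : ¬ ∃ (a b : ℝ) (y : ℝ → LinearMap.range (P : X →ₗ[ℝ] X)), a < b ∧
        ∀ t ∈ Set.Ioo a b, HasDerivAt y (g (t, y t)) t) :
    ∃ f : X → X, Continuous f ∧ ¬ ∃ (a b : ℝ) (x : ℝ → X), a < b ∧
        ∀ t ∈ Set.Ioo a b, HasDerivAt x (f (x t)) t :=
  autonomous_from_complemented_subspace_general P hproj hproper g hg hnosol
end

section
/- Let X, Y be Banach spaces and Q : X → Y a quotient map (bounded linear surjection). If there is a continuous map g : ℝ × Y → Y such that y' = g(t, y) has no solution on any open interval, then there is a continuous map f : ℝ × X → X such that x' = f(t, x) has no solution on any open interval. -/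
open Filter Topology

/-!
Bartle–Graves gives a continuous `Ψ : Y → X` with `Q ∘ Ψ = id`; then `f (t, x) = Ψ (g (t, Q x))`
is continuous, and if `x` solved `x' = f (t, x)` on an interval, `Q ∘ x` would solve `y' = g (t, y)`
there, since `(Q ∘ x)' = Q (Ψ (g (t, Q x))) = g (t, Q x)`.

For Bartle–Graves, a partition of unity glues local exact preimages (from the open mapping
theorem) into continuous maps `φ n` with `‖Q (φ n y) - y‖ < 2⁻ⁿ` and `‖φ n y‖ < C ‖y‖ + 2⁻ⁿ`.
Correcting the residual `y - Q (∑_{k<n} …)` by `φ n` at each step gives a series whose terms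
after the first are bounded by `(C + 1) 2⁻ⁿ` uniformly in `y`, so its sum is continuous.
-/

namespace ContinuousLinearMap

variable {X : Type*} [NormedAddCommGroup X] [NormedSpace ℝ X]
  {Y : Type*} [NormedAddCommGroup Y] [NormedSpace ℝ Y]

theorem exists_continuous_approx_rightInverse [CompleteSpace X] [CompleteSpace Y]
    (Q : X →L[ℝ] Y) (hQ : Function.Surjective Q) :
    ∃ C, 0 ≤ C ∧ ∀ δ > 0, ∃ φ : Y → X, Continuous φ ∧
      ∀ y, dist (Q (φ y)) y < δ ∧ ‖φ y‖ < C * ‖y‖ + δ := by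
  obtain ⟨C, hC, hpre⟩ := Q.exists_preimage_norm_le hQ
  refine ⟨C, hC.le, fun δ hδ => ?_⟩
  let t : Y → Set X := fun y => Q ⁻¹' Metric.ball y δ ∩ Metric.ball 0 (C * ‖y‖ + δ)
  have ht : ∀ y, Convex ℝ (t y) := fun y =>
    ((convex_ball y δ).linear_preimage Q.toLinearMap).inter (convex_ball 0 _)
  have hlocal : ∀ y, ∃ x, ∀ᶠ y' in 𝓝 y, x ∈ t y' := by
    intro y
    obtain ⟨x, rfl, hx⟩ := hpre y
    have hnorm : ∀ᶠ y' in 𝓝 (Q x), ‖x‖ < C * ‖y'‖ + δ :=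
      (show Continuous fun y' : Y => C * ‖y'‖ + δ by fun_prop).continuousAt.eventually
        (lt_mem_nhds (by linarith))
    refine ⟨x, ?_⟩
    filter_upwards [Metric.ball_mem_nhds (Q x) hδ, hnorm] with y' hy' hx'
    exact ⟨Metric.mem_ball_comm.mp hy', by simpa using hx'⟩
  obtain ⟨φ, hφ⟩ := exists_continuous_forall_mem_convex_of_local_const ht hlocal
  exact ⟨φ, φ.continuous, fun y => ⟨(hφ y).1, by simpa using (hφ y).2⟩⟩

section Correction

variable (Q : X →L[ℝ] Y) (φ : ℕ → Y → X)

def correctionResidual : ℕ → Y → Y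
  | 0, y => y
  | n + 1, y => correctionResidual n y - Q (φ n (correctionResidual n y))

theorem continuous_correctionResidual (hφ : ∀ n, Continuous (φ n)) (n : ℕ) :
    Continuous (Q.correctionResidual φ n) := by
  induction n with
  | zero => exact continuous_id
  | succ n ih => exact ih.sub (Q.continuous.comp ((hφ n).comp ih))

theorem norm_correctionResidual_succ_le {ε : ℕ → ℝ} (hφ : ∀ n y, dist (Q (φ n y)) y ≤ ε n)
    (n : ℕ) (y : Y) : ‖Q.correctionResidual φ (n + 1) y‖ ≤ ε n := by
  rw [correctionResidual, ← dist_eq_norm, dist_comm]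
  exact hφ n _

theorem sum_range_map_correction (y : Y) (n : ℕ) :
    ∑ i ∈ Finset.range n, Q (φ i (Q.correctionResidual φ i y)) =
      y - Q.correctionResidual φ n y := by
  simpa [correctionResidual] using Finset.sum_range_sub' (Q.correctionResidual φ · y) n

theorem map_eq_of_hasSum_correction {x : X} {y : Y}
    (hsum : HasSum (fun n => φ n (Q.correctionResidual φ n y)) x)
    (hres : Tendsto (Q.correctionResidual φ · y) atTop (𝓝 0)) : Q x = y := by
  have hpartial := (hsum.mapL Q).tendsto_sum_nat
  simp only [sum_range_map_correction] at hpartial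
  exact tendsto_nhds_unique hpartial (by simpa using hres.const_sub y)

theorem exists_continuous_rightInverse_of_approx [CompleteSpace X] {C : ℝ} (hC : 0 ≤ C)
    (happrox : ∀ δ > 0, ∃ φ : Y → X, Continuous φ ∧
      ∀ y, dist (Q (φ y)) y < δ ∧ ‖φ y‖ < C * ‖y‖ + δ) :
    ∃ Ψ : Y → X, Continuous Ψ ∧ Function.RightInverse Ψ Q := by
  choose φ hφc hφ using fun n : ℕ => happrox ((1 / 2) ^ n) (by positivity)
  set r := Q.correctionResidual φ
  have hr : ∀ n y, ‖r (n + 1) y‖ ≤ (1 / 2) ^ n :=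
    Q.norm_correctionResidual_succ_le φ fun n y => (hφ n y).1.le
  have htail : ∀ n y, ‖φ (n + 1) (r (n + 1) y)‖ ≤ (C + 1) * (1 / 2) ^ n := fun n y =>
    calc ‖φ (n + 1) (r (n + 1) y)‖ ≤ C * ‖r (n + 1) y‖ + (1 / 2) ^ (n + 1) := (hφ _ _).2.le
      _ ≤ C * (1 / 2) ^ n + (1 / 2) ^ n :=
        add_le_add (mul_le_mul_of_nonneg_left (hr n y) hC)
          (pow_le_pow_of_le_one (by norm_num) (by norm_num) n.le_succ)
      _ = (C + 1) * (1 / 2) ^ n := by ring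
  have hgeom : Summable fun n => (C + 1) * (1 / 2 : ℝ) ^ n := summable_geometric_two.mul_left _
  have hsum : ∀ y, Summable fun n => φ n (r n y) := fun y =>
    (summable_nat_add_iff 1).mp (hgeom.of_norm_bounded (htail · y))
  refine ⟨fun y => ∑' n, φ n (r n y), ?_, fun y => ?_⟩
  · have hsplit : (fun y => ∑' n, φ n (r n y)) =
        fun y => φ 0 y + ∑' n, φ (n + 1) (r (n + 1) y) :=
      funext fun y => (hsum y).tsum_eq_zero_add
    rw [hsplit]
    exact (hφc 0).add <| continuous_tsum
      (fun n => (hφc _).comp (Q.continuous_correctionResidual φ hφc _)) hgeom htail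
  · refine Q.map_eq_of_hasSum_correction φ (hsum y).hasSum ?_
    refine (tendsto_add_atTop_iff_nat 1).mp (squeeze_zero_norm (hr · y) ?_)
    exact tendsto_pow_atTop_nhds_zero_of_lt_one (by norm_num) (by norm_num)

end Correction

/-- The Bartle–Graves theorem. -/
theorem exists_continuous_rightInverse_of_surjective [CompleteSpace X] [CompleteSpace Y]
    (Q : X →L[ℝ] Y) (hQ : Function.Surjective Q) :
    ∃ Ψ : Y → X, Continuous Ψ ∧ Function.RightInverse Ψ Q :=
  let ⟨_, hC, happrox⟩ := Q.exists_continuous_approx_rightInverse hQ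
  Q.exists_continuous_rightInverse_of_approx hC happrox

end ContinuousLinearMap

theorem nosolution_lifts_through_quotient
    {X : Type*} [NormedAddCommGroup X] [NormedSpace ℝ X] [CompleteSpace X]
    {Y : Type*} [NormedAddCommGroup Y] [NormedSpace ℝ Y] [CompleteSpace Y]
    (Q : X →L[ℝ] Y) (hQ : Function.Surjective Q)
    (g : ℝ × Y → Y) (hg : Continuous g)
    (hnosol : ¬ ∃ (a b : ℝ) (y : ℝ → Y), a < b ∧
        ∀ t ∈ Set.Ioo a b, HasDerivAt y (g (t, y t)) t) :
    ∃ f : ℝ × X → X, Continuous f ∧ ¬ ∃ (a b : ℝ) (x : ℝ → X), a < b ∧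
        ∀ t ∈ Set.Ioo a b, HasDerivAt x (f (t, x t)) t := by
  obtain ⟨Ψ, hΨ, hQΨ⟩ := Q.exists_continuous_rightInverse_of_surjective hQ
  refine ⟨fun p => Ψ (g (p.1, Q p.2)), by fun_prop, ?_⟩
  rintro ⟨a, b, x, hab, hx⟩
  refine hnosol ⟨a, b, Q ∘ x, hab, fun t ht => ?_⟩
  have hQx := Q.hasFDerivAt.comp_hasDerivAt t (hx t ht)
  rwa [hQΨ] at hQx
end

section
/- With X, {e_k; f_k}, Q_n, Φ_r as above: ‖Φ_r(x)‖ ≤ ‖x‖ for every x ∈ X. -/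
open Filter Finset Topology

/-- The piecewise-linear cutoff function `φ_r`: equal to `1` on `[-r, r]`,
`0` outside `(-2r, 2r)`, and `2 - |t|/r` in between. -/
noncomputable def phi (r t : ℝ) : ℝ :=
  if |t| ≤ r then 1 else if |t| ≤ 2 * r then 2 - |t| / r else 0

lemma phi_nonneg (r : ℝ) (hr : 0 < r) (t : ℝ) : 0 ≤ phi r t := by
  unfold phi
  split_ifs with h1 h2
  · norm_num
  · have : |t| / r ≤ 2 := by rw [div_le_iff₀ hr]; linarith
    linarith
  · exact le_refl 0

lemma phi_le_one (r : ℝ) (hr : 0 < r) (t : ℝ) : phi r t ≤ 1 := by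
  unfold phi
  split_ifs with h1 h2
  · exact le_refl 1
  · push_neg at h1
    have : 1 ≤ |t| / r := by rw [le_div_iff₀ hr]; linarith
    linarith
  · norm_num

lemma phi_anti (r : ℝ) (hr : 0 < r) {s t : ℝ} (hs : 0 ≤ s) (hst : s ≤ t) :
    phi r t ≤ phi r s := by
  have ht : 0 ≤ t := hs.trans hst
  have hdiv : s / r ≤ t / r := by gcongr
  unfold phi
  rw [abs_of_nonneg hs, abs_of_nonneg ht]
  split_ifs with h1 h2 h3 h4 h5 h6 h7 h8
  any_goals push_neg at *
  any_goals linarith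
  all_goals
    first
    | (have : 1 ≤ t / r := by rw [le_div_iff₀ hr]; linarith
       linarith)
    | (have : s / r ≤ 2 := by rw [div_le_iff₀ hr]; linarith
       linarith)

/-- `‖Φ_r(x)‖ ≤ ‖x‖` for every `x ∈ X`. -/
theorem Phi_norm_le
    {X : Type*} [NormedAddCommGroup X] [NormedSpace ℝ X] [CompleteSpace X]
    (e : ℕ → X) (f : ℕ → X →L[ℝ] ℝ)
    (hexp : ∀ x : X, Tendsto (fun n => ∑ k ∈ Finset.range n, f k x • e k) atTop (𝓝 x))
    (hbi : ∀ k j, f k (e j) = if k = j then (1 : ℝ) else 0)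
    (hR : ∀ n, 1 ≤ n → ‖tailProj f e n‖ = 1)
    (r : ℝ) (hr : 0 < r) (Φ : X → X)
    (hΦ : ∀ x : X, Tendsto
      (fun n => ∑ k ∈ Finset.range n, phi r ‖tailProj f e k x‖ • (f k x • e k))
      atTop (𝓝 (Φ x)))
    (x : X) :
    ‖Φ x‖ ≤ ‖x‖ := by
  set T : ℕ → X →L[ℝ] X := tailProj f e with hT
  set c : ℕ → ℝ := fun n => phi r ‖T n x‖ with hc
  have hT0 : T 0 x = x := by simp [hT, tailProj]
  have hstep : ∀ n, T (n + 1) x = T n x - f n x • e n := by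
    intro n
    simp [hT, tailProj, Finset.sum_range_succ, sub_sub,
      ContinuousLinearMap.sub_apply, ContinuousLinearMap.sum_apply]
  have hop : ∀ n y, 1 ≤ n → ‖T n y‖ ≤ ‖y‖ := by
    intro n y hn
    calc ‖T n y‖ ≤ ‖T n‖ * ‖y‖ := (T n).le_opNorm y
    _ = ‖y‖ := by rw [hR n hn, one_mul]
  have hTe : ∀ m k, k < m → T m (e k) = 0 := by
    intro m k hk
    simp only [hT, tailProj, ContinuousLinearMap.sub_apply,
      ContinuousLinearMap.coe_id', id_eq, ContinuousLinearMap.sum_apply,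
      ContinuousLinearMap.smulRight_apply, hbi]
    rw [Finset.sum_congr rfl (fun j _ => by rw [ite_smul, one_smul, zero_smul]),
      Finset.sum_ite_eq' (Finset.range m) k e]
    simp [hk]
  have hcomp : ∀ n, T (n + 1) (T n x) = T (n + 1) x := by
    intro n
    have : T n x = x - ∑ k ∈ Finset.range n, f k x • e k := by
      simp [hT, tailProj, ContinuousLinearMap.sub_apply, ContinuousLinearMap.sum_apply]
    rw [this, map_sub, map_sum]
    have : ∀ k ∈ Finset.range n, T (n + 1) (f k x • e k) = 0 := by
      intro k hk
      rw [map_smul, hTe (n + 1) k (by have := Finset.mem_range.mp hk; omega), smul_zero]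
    rw [Finset.sum_congr rfl this]
    simp
  have hTdec : ∀ n, ‖T (n + 1) x‖ ≤ ‖T n x‖ := by
    intro n
    rw [← hcomp n]
    exact hop (n + 1) (T n x) (by omega)
  have hcmono : ∀ n, c n ≤ c (n + 1) :=
    fun n => phi_anti r hr (norm_nonneg _) (hTdec n)
  have hc0 : ∀ n, 0 ≤ c n := fun n => phi_nonneg r hr _
  have hc1 : ∀ n, c n ≤ 1 := fun n => phi_le_one r hr _
  set S : ℕ → X := fun n => ∑ k ∈ Finset.range n, c k • (f k x • e k) with hS
  have key : ∀ n, ‖S n + c n • T n x‖ ≤ c n * ‖x‖ := by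
    intro n
    induction n with
    | zero =>
      simp only [hS, Finset.range_zero, Finset.sum_empty, zero_add, hT0]
      rw [norm_smul, Real.norm_eq_abs, abs_of_nonneg (hc0 0)]
    | succ n ih =>
      have heq : S (n + 1) + c (n + 1) • T (n + 1) x
          = (S n + c n • T n x) + (c (n + 1) - c n) • T (n + 1) x := by
        simp only [hS, Finset.sum_range_succ]
        rw [hstep n]
        module
      rw [heq]
      calc ‖(S n + c n • T n x) + (c (n + 1) - c n) • T (n + 1) x‖
          ≤ ‖S n + c n • T n x‖ + ‖(c (n + 1) - c n) • T (n + 1) x‖ := norm_add_le _ _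
        _ ≤ c n * ‖x‖ + (c (n + 1) - c n) * ‖x‖ := by
            gcongr
            rw [norm_smul, Real.norm_eq_abs, abs_of_nonneg (by linarith [hcmono n])]
            gcongr
            · linarith [hcmono n]
            · exact hop (n + 1) x (by omega)
        _ = c (n + 1) * ‖x‖ := by ring
  have hbound : ∀ n, ‖S n‖ ≤ ‖x‖ + ‖T n x‖ := by
    intro n
    have : ‖S n‖ ≤ ‖S n + c n • T n x‖ + ‖c n • T n x‖ := by
      have := norm_sub_le (S n + c n • T n x) (c n • T n x)
      simpa using this
    calc ‖S n‖ ≤ ‖S n + c n • T n x‖ + ‖c n • T n x‖ := this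
      _ ≤ c n * ‖x‖ + c n * ‖T n x‖ := by
          gcongr
          · exact key n
          · rw [norm_smul, Real.norm_eq_abs, abs_of_nonneg (hc0 n)]
      _ ≤ ‖x‖ + ‖T n x‖ := by
          nlinarith [hc1 n, hc0 n, norm_nonneg x, norm_nonneg ((T n) x)]
  have hTx0 : Tendsto (fun n => ‖T n x‖) atTop (𝓝 0) := by
    have h1 : Tendsto (fun n => x - ∑ k ∈ Finset.range n, f k x • e k) atTop (𝓝 (x - x)) :=
      tendsto_const_nhds.sub (hexp x)
    rw [sub_self] at h1
    have h2 : (fun n => T n x) = fun n => x - ∑ k ∈ Finset.range n, f k x • e k := by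
      funext n
      simp [hT, tailProj, ContinuousLinearMap.sub_apply, ContinuousLinearMap.sum_apply]
    rw [show (0:ℝ) = ‖(0:X)‖ by simp]
    exact (h2 ▸ h1).norm
  have hS1 : Tendsto (fun n => ‖S n‖) atTop (𝓝 ‖Φ x‖) := (hΦ x).norm
  have hS2 : Tendsto (fun n => ‖x‖ + ‖T n x‖) atTop (𝓝 (‖x‖ + 0)) :=
    tendsto_const_nhds.add hTx0
  have := le_of_tendsto_of_tendsto' hS1 hS2 hbound
  simpa using this
end

section
/- (Peano) Let n ∈ ℕ, f : ℝ × ℝⁿ → ℝⁿ continuous, t₀ ∈ ℝ, x₀ ∈ ℝⁿ. Then there exist an open interval I containing t₀ and a differentiable x : I → ℝⁿ with x(t₀) = x₀ and x'(t) = f(t, x(t)) for all t ∈ I. -/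
/-!
Approximate `f` uniformly by smooth, hence locally Lipschitz, vector fields. By Picard–Lindelöf
each approximation has a solution on one fixed interval, and all these solutions are `L`-Lipschitz
with the same initial value, so by Arzelà–Ascoli a subsequence converges uniformly. The integral
equation `x t = x₀ + ∫_{t₀}^t f s (x s) ds` passes to the limit.
-/

open Function Set Metric Filter Topology intervalIntegral MeasureTheory
open scoped NNReal

namespace ODE

variable {E : Type*} [NormedAddCommGroup E]

lemma dist_picard_picard_le [NormedSpace ℝ E] {f g : ℝ → E → E} {α : ℝ → E} {t₀ t : ℝ} (x₀ : E)
    {ε : ℝ} (hf : IntervalIntegrable (fun s ↦ f s (α s)) volume t₀ t)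
    (hg : IntervalIntegrable (fun s ↦ g s (α s)) volume t₀ t)
    (hfg : ∀ s ∈ uIoc t₀ t, dist (f s (α s)) (g s (α s)) ≤ ε) :
    dist (picard f t₀ x₀ α t) (picard g t₀ x₀ α t) ≤ ε * |t - t₀| := by
  rw [picard_apply, picard_apply, dist_add_left, dist_eq_norm, ← integral_sub hf hg]
  exact norm_integral_le_of_norm_le_const fun s hs ↦ by simpa only [dist_eq_norm] using hfg s hs

variable {tmin tmax : ℝ} {t₀ : Icc tmin tmax} {x₀ : E} {f : ℝ → E → E} {r a L : ℝ≥0}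

namespace FunSpace

instance [ProperSpace E] : CompactSpace (FunSpace t₀ x₀ r L) := by
  rw [← isCompact_univ_iff, isUniformInducing_toContinuousMap.isInducing.isCompact_iff, image_univ,
    range_toContinuousMap]
  apply ArzelaAscoli.isCompact_of_equicontinuous
  · have himage : ContinuousMap.toFun ''
        {α : C(Icc tmin tmax, E) | LipschitzWith L α ∧ α t₀ ∈ closedBall x₀ r} =
        {α : Icc tmin tmax → E | LipschitzWith L α ∧ α t₀ ∈ closedBall x₀ r} := by
      ext α
      exact ⟨by rintro ⟨α, hα, rfl⟩; exact hα, fun hα ↦ ⟨⟨α, hα.1.continuous⟩, hα, rfl⟩⟩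
    rw [himage]
    refine (isCompact_univ_pi fun _ ↦ isCompact_closedBall x₀ (r + L * (tmax - tmin)))
      |>.of_isClosed_subset ?_ ?_
    · rw [ofPred_and]
      exact (isClosed_setOfPred_lipschitzWith L).inter
        (isClosed_closedBall.preimage (continuous_apply t₀))
    · rintro α ⟨hα, hα₀⟩ t -
      calc dist (α t) x₀ ≤ dist (α t) (α t₀) + dist (α t₀) x₀ := dist_triangle _ _ _
        _ ≤ L * (tmax - tmin) + r := by
          gcongr
          · exact hα.dist_le_mul_of_le (Real.dist_le_of_mem_Icc t.2 t₀.2)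
          · exact hα₀
        _ = r + L * (tmax - tmin) := add_comm _ _
  · exact (LipschitzWith.uniformEquicontinuous _ L fun α ↦ α.2.1).equicontinuous

lemma continuous_eval_compProj :
    Continuous fun p : FunSpace t₀ x₀ r L × ℝ ↦ p.1.compProj p.2 :=
  continuous_eval.comp (isUniformInducing_toContinuousMap.uniformContinuous.continuous.prodMap
    (continuous_projIcc (h := t₀.2.1.trans t₀.2.2)))

lemma continuous_picard_compProj [NormedSpace ℝ E] (hf : Continuous (uncurry f)) (x : E) (t : ℝ) :
    Continuous fun α : FunSpace t₀ x₀ r L ↦ picard f t₀ x α.compProj t := by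
  have : Continuous fun p : FunSpace t₀ x₀ r L × ℝ ↦ f p.2 (p.1.compProj p.2) :=
    hf.comp (continuous_snd.prodMk continuous_eval_compProj)
  exact continuous_const.add (continuous_parametric_intervalIntegral_of_continuous' this _ _)

variable [NormedSpace ℝ E] [FiniteDimensional ℝ E]

lemma exists_forall_dist_picard_le (hf : Continuous (uncurry f))
    (hnorm : ∀ t ∈ Icc tmin tmax, ∀ x ∈ closedBall x₀ a, ‖f t x‖ < L)
    (hmul : L * max (tmax - t₀) (t₀ - tmin) ≤ a) {ε : ℝ} (hε : 0 < ε) :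
    ∃ α : FunSpace t₀ x₀ 0 L, ∀ t ∈ Icc tmin tmax,
      dist (α.compProj t) (picard f t₀ x₀ α.compProj t) ≤ ε * |t - t₀| := by
  set K := Icc tmin tmax ×ˢ closedBall x₀ a
  have hK : IsCompact K := isCompact_Icc.prod (isCompact_closedBall x₀ a)
  obtain ⟨p₀, hp₀, hmax⟩ := hK.exists_isMaxOn ⟨(t₀, x₀), t₀.2, mem_closedBall_self a.2⟩
    (continuous_norm.comp hf).continuousOn
  -- the slack `δ` keeps approximations of `f` within `δ` bounded by `L` on `K`
  set δ := L - ‖uncurry f p₀‖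
  have hδ : 0 < δ := sub_pos.2 (hnorm _ hp₀.1 _ hp₀.2)
  obtain ⟨g, hg, hgf, -⟩ := hf.exists_contDiff_approx 1 continuous_const fun _ ↦ lt_min hε hδ
  obtain ⟨K', hK'⟩ := hg.contDiffOn.exists_lipschitzOnWith one_ne_zero
    ((convex_Icc _ _).prod (convex_closedBall _ _)) hK
  have hPL : IsPicardLindelof (fun t x ↦ g (t, x)) t₀ x₀ a 0 L K' := by
    refine ⟨fun t ht ↦ ?_, fun x _ ↦ ?_, fun t ht x hx ↦ ?_, by simpa using hmul⟩
    · simpa [comp_def] using hK'.comp (LipschitzWith.prodMk_left t).lipschitzOnWith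
        fun x hx ↦ ⟨ht, hx⟩
    · exact (hg.continuous.comp (continuous_id.prodMk continuous_const)).continuousOn
    · have hgf' : ‖g (t, x) - f t x‖ ≤ δ :=
        (dist_eq_norm _ _).symm.trans_le ((hgf (t, x)).le.trans (min_le_right _ _))
      have hfp : ‖f t x‖ ≤ ‖uncurry f p₀‖ := isMaxOn_iff.1 hmax (t, x) ⟨ht, hx⟩
      linarith [norm_le_norm_add_norm_sub' (g (t, x)) (f t x)]
  obtain ⟨α, hα⟩ := exists_isFixedPt_next hPL (mem_closedBall_self le_rfl)
  refine ⟨α, fun t ht ↦ ?_⟩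
  have hfix : α.compProj t = picard (fun t x ↦ g (t, x)) t₀ x₀ α.compProj t := by
    rw [compProj_of_mem ht]
    nth_rw 1 [← hα]
    rfl
  have hcont : Continuous fun s ↦ (s, α.compProj s) := continuous_id.prodMk α.continuous_compProj
  rw [hfix]
  exact dist_picard_picard_le x₀ ((hg.continuous.comp hcont).intervalIntegrable _ _)
    ((hf.comp hcont).intervalIntegrable _ _) fun s _ ↦ (hgf _).le.trans (min_le_left _ _)

lemma exists_forall_mem_Icc_eq_picard (hf : Continuous (uncurry f))
    (hnorm : ∀ t ∈ Icc tmin tmax, ∀ x ∈ closedBall x₀ a, ‖f t x‖ < L)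
    (hmul : L * max (tmax - t₀) (t₀ - tmin) ≤ a) :
    ∃ α : FunSpace t₀ x₀ 0 L, ∀ t ∈ Icc tmin tmax, α.compProj t = picard f t₀ x₀ α.compProj t := by
  choose α hα using fun m : ℕ ↦
    exists_forall_dist_picard_le hf hnorm hmul (Nat.one_div_pos_of_nat (n := m))
  obtain ⟨β, φ, hφ, hαβ⟩ := CompactSpace.tendsto_subseq α
  refine ⟨β, fun t ht ↦ ?_⟩
  set defect := fun γ : FunSpace t₀ x₀ 0 L ↦ dist (γ.compProj t) (picard f t₀ x₀ γ.compProj t)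
  have hdefect : Continuous defect :=
    (continuous_eval_compProj.comp (continuous_id.prodMk continuous_const)).dist
      (continuous_picard_compProj hf x₀ t)
  have hsmall : Tendsto (fun m ↦ defect (α (φ m))) atTop (𝓝 0) := by
    have : Tendsto (fun m ↦ 1 / ((φ m : ℝ) + 1) * |t - t₀|) atTop (𝓝 0) := by
      simpa using (tendsto_one_div_add_atTop_nhds_zero_nat.comp hφ.tendsto_atTop).mul_const |t - t₀|
    exact squeeze_zero (fun _ ↦ dist_nonneg) (fun m ↦ hα (φ m) t ht) this
  have hlim : Tendsto (fun m ↦ defect (α (φ m))) atTop (𝓝 (defect β)) :=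
    hdefect.continuousAt.tendsto.comp hαβ
  exact dist_eq_zero.1 (tendsto_nhds_unique hlim hsmall)

end FunSpace

theorem exists_eq_forall_mem_Icc_hasDerivWithinAt_of_continuous [NormedSpace ℝ E]
    [FiniteDimensional ℝ E] (hf : Continuous (uncurry f))
    (hnorm : ∀ t ∈ Icc tmin tmax, ∀ x ∈ closedBall x₀ a, ‖f t x‖ < L)
    (hmul : L * max (tmax - t₀) (t₀ - tmin) ≤ a) :
    ∃ α : ℝ → E, α t₀ = x₀ ∧
      ∀ t ∈ Icc tmin tmax, HasDerivWithinAt α (f t (α t)) (Icc tmin tmax) t := by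
  obtain ⟨α, hα⟩ := FunSpace.exists_forall_mem_Icc_eq_picard hf hnorm hmul
  refine ⟨α.compProj, by rw [FunSpace.compProj_val, FunSpace.apply_of_zero], fun t ht ↦ ?_⟩
  exact (hasDerivWithinAt_picard_Icc t₀.2 hf.continuousOn α.continuous_compProj.continuousOn
    (fun _ _ ↦ mem_univ _) x₀ ht).congr_of_mem hα ht

end ODE

/-- Peano's existence theorem in `ℝⁿ`. -/
theorem peano_existence (n : ℕ)
    (f : ℝ × EuclideanSpace ℝ (Fin n) → EuclideanSpace ℝ (Fin n))
    (hf : Continuous f) (t₀ : ℝ) (x₀ : EuclideanSpace ℝ (Fin n)) :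
    ∃ (a b : ℝ), a < b ∧ t₀ ∈ Set.Ioo a b ∧
      ∃ x : ℝ → EuclideanSpace ℝ (Fin n), x t₀ = x₀ ∧
        ∀ t ∈ Set.Ioo a b, HasDerivAt x (f (t, x t)) t := by
  obtain ⟨M, hM⟩ := (isCompact_Icc.prod (isCompact_closedBall x₀ 1)).exists_bound_of_continuousOn
    (s := Icc (t₀ - 1) (t₀ + 1) ×ˢ closedBall x₀ 1) hf.continuousOn
  set L : ℝ≥0 := M.toNNReal + 1
  have hL : 1 ≤ (L : ℝ) := by simp [L]
  set T : ℝ := (L : ℝ)⁻¹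
  have hT : 0 < T := by positivity
  have hT₁ : T ≤ 1 := inv_le_one_of_one_le₀ hL
  have hnorm : ∀ t ∈ Icc (t₀ - T) (t₀ + T), ∀ y ∈ closedBall x₀ (1 : ℝ≥0), ‖f (t, y)‖ < L :=
    fun t ht y hy ↦ calc
      ‖f (t, y)‖ ≤ M := hM _ ⟨⟨by linarith [ht.1], by linarith [ht.2]⟩, hy⟩
      _ ≤ M.toNNReal := Real.le_coe_toNNReal M
      _ < L := by simp [L]
  have hmul : L * max (t₀ + T - t₀) (t₀ - (t₀ - T)) ≤ (1 : ℝ≥0) := by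
    simp [T, (zero_lt_one.trans_le hL).ne']
  obtain ⟨x, hx₀, hx⟩ := ODE.exists_eq_forall_mem_Icc_hasDerivWithinAt_of_continuous
    (f := fun t x ↦ f (t, x)) (t₀ := ⟨t₀, by linarith, by linarith⟩) hf hnorm hmul
  refine ⟨t₀ - T, t₀ + T, by linarith, ⟨by linarith, by linarith⟩, x, hx₀, fun t ht ↦ ?_⟩
  exact (hx t (Ioo_subset_Icc_self ht)).hasDerivAt (Icc_mem_nhds ht.1 ht.2)
end
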